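/- Let H be a simple bipartite matching covered graph on at least four vertices with color classes A and B. An edge e of H is non-removable if and only if there exist a partition (A_0, A_1) of A and a partition (B_0, B_1) of B such that |A_0| = |B_0| and e is the only edge of H joining a vertex of B_0 to a vertex of A_1. -/

import Mathlib

/-! Preamble: definitions for matching covered graphs, bricks, removable
doubletons, R-compatible/R-thin edges, retracts, ladders, partial biwheels,
R-configurations, and the eleven infinite families. -/

/-- The graph has a perfect matching. -/
def HasPerfMatching {V : Type*} (G : SimpleGraph V) : Prop :=
  ∃ M : G.Subgraph, M.IsPerfectMatching

/-- A graph (with at least two vertices) is matching covered if it is connected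
and each of its edges lies in some perfect matching. -/
def MatchingCovered {V : Type*} (G : SimpleGraph V) : Prop :=
  2 ≤ Nat.card V ∧ G.Connected ∧
    ∀ e ∈ G.edgeSet, ∃ M : G.Subgraph, M.IsPerfectMatching ∧ e ∈ M.edgeSet

/-- An edge of a matching covered graph is removable if deleting it leaves a
matching covered graph. -/
def RemovableEdge {V : Type*} (G : SimpleGraph V) (e : Sym2 V) : Prop :=
  e ∈ G.edgeSet ∧ MatchingCovered (G.deleteEdges {e})

/-- The number of odd connected components. -/
noncomputable def oddCompCount {V : Type*} (G : SimpleGraph V) : ℕ :=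
  Nat.card {c : G.ConnectedComponent // Odd (Nat.card c.supp)}

/-- `S` is a barrier of `G`: `S` is nonempty and the number of odd components
of `G − S` equals `|S|`. -/
def IsBarrierOf {V : Type*} (G : SimpleGraph V) (S : Set V) : Prop :=
  S.Nonempty ∧ oddCompCount (G.induce (Sᶜ : Set V)) = S.ncard

/-- Bicritical: at least four vertices, and deleting any two distinct vertices
leaves a graph with a perfect matching. -/
def BicriticalGraph {V : Type*} (G : SimpleGraph V) : Prop :=
  4 ≤ Nat.card V ∧ ∀ u v : V, u ≠ v →
    HasPerfMatching (G.induce (({u, v} : Set V)ᶜ))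

/-- 3-connected: at least four vertices, and deleting any set of at most two
vertices leaves a connected graph. -/
def ThreeConnectedGraph {V : Type*} (G : SimpleGraph V) : Prop :=
  4 ≤ Nat.card V ∧ ∀ S : Set V, S.ncard ≤ 2 → (G.induce (Sᶜ : Set V)).Connected

/-- A brick is a 3-connected bicritical graph. -/
def BrickGraph {V : Type*} (G : SimpleGraph V) : Prop :=
  ThreeConnectedGraph G ∧ BicriticalGraph G

/-- `A`, `B` form a bipartition of `G`. -/
def BipartitionOf {V : Type*} (G : SimpleGraph V) (A B : Set V) : Prop :=
  A ∪ B = Set.univ ∧ Disjoint A B ∧ ∀ ⦃u v : V⦄, G.Adj u v → (u ∈ A ↔ v ∈ B)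

/-- `G` is bipartite. -/
def BipartiteGraph {V : Type*} (G : SimpleGraph V) : Prop :=
  ∃ A B : Set V, BipartitionOf G A B

/-- `{α, β}` is a removable doubleton of `G`: a pair of distinct edges whose
deletion leaves a bipartite matching covered graph. -/
def RemovableDoubleton {V : Type*} (G : SimpleGraph V) (α β : Sym2 V) : Prop :=
  α ≠ β ∧ α ∈ G.edgeSet ∧ β ∈ G.edgeSet ∧
    BipartiteGraph (G.deleteEdges {α, β}) ∧ MatchingCovered (G.deleteEdges {α, β})

/-- An `R`-brick: a brick with a fixed removable doubleton `R = {α, β}`. -/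
def RBrick {V : Type*} (G : SimpleGraph V) (α β : Sym2 V) : Prop :=
  BrickGraph G ∧ RemovableDoubleton G α β

/-- `V(R)`: the set of the four ends of the doubleton edges. -/
def VR {V : Type*} (α β : Sym2 V) : Set V := {v | v ∈ α ∨ v ∈ β}

/-- `e` is `R`-compatible: it is an edge of `H := G − R` and is removable in
both `G` and `H`. -/
def RCompatible {V : Type*} (G : SimpleGraph V) (α β e : Sym2 V) : Prop :=
  e ∈ (G.deleteEdges {α, β}).edgeSet ∧
    MatchingCovered (G.deleteEdges {e}) ∧
    MatchingCovered ((G.deleteEdges {α, β}).deleteEdges {e})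

/-- `e` is `R`-thin: `R`-compatible, and every barrier of `G − e` has at most
two vertices. -/
def RThin {V : Type*} (G : SimpleGraph V) (α β e : Sym2 V) : Prop :=
  RCompatible G α β e ∧
    ∀ S : Set V, IsBarrierOf (G.deleteEdges {e}) S → S.ncard ≤ 2

/-- The number of maximal nontrivial barriers of a graph. -/
noncomputable def barrierIndex {V : Type*} (G : SimpleGraph V) : ℕ :=
  Set.ncard {S : Set V | IsBarrierOf G S ∧ 2 ≤ S.ncard ∧
    ∀ T : Set V, IsBarrierOf G T → S ⊆ T → T = S}

/-- Degree of a vertex (as the cardinality of its neighbourhood). -/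
noncomputable def degOf {V : Type*} (G : SimpleGraph V) (v : V) : ℕ :=
  (G.neighborSet v).ncard

/-- The relation identifying each degree-two vertex with its neighbours
(bicontraction of all degree-two vertices at once). -/
def bicontractPairRel {V : Type*} (G : SimpleGraph V) (u v : V) : Prop :=
  G.Adj u v ∧ (degOf G u = 2 ∨ degOf G v = 2)

/-- The vertex identifications performed when taking the retract. -/
def retractSetoid {V : Type*} (G : SimpleGraph V) : Setoid V :=
  Relation.EqvGen.setoid (bicontractPairRel G)

/-- The retract of `G` (as a simple graph on the quotient). -/
def retractGraph {V : Type*} (G : SimpleGraph V) :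
    SimpleGraph (Quotient (retractSetoid G)) where
  Adj X Y := X ≠ Y ∧ ∃ u v : V,
    Quotient.mk (retractSetoid G) u = X ∧ Quotient.mk (retractSetoid G) v = Y ∧ G.Adj u v
  symm := by
    constructor
    rintro X Y ⟨hne, u, v, hu, hv, huv⟩
    exact ⟨hne.symm, v, u, hv, hu, huv.symm⟩
  loopless := by
    constructor
    rintro X ⟨hne, -⟩
    exact hne rfl

/-- The retract of `G` has a pair of parallel edges. -/
def retractHasParallel {V : Type*} (G : SimpleGraph V) : Prop :=
  ∃ p q p' q' : V, G.Adj p q ∧ G.Adj p' q' ∧ s(p, q) ≠ s(p', q') ∧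
    ¬ Relation.EqvGen (bicontractPairRel G) p q ∧
    ((Relation.EqvGen (bicontractPairRel G) p p' ∧
        Relation.EqvGen (bicontractPairRel G) q q') ∨
     (Relation.EqvGen (bicontractPairRel G) p q' ∧
        Relation.EqvGen (bicontractPairRel G) q p'))

/-- `e` is strictly `R`-thin: `R`-thin and the retract of `G − e` has no
parallel edges. -/
def StrictlyRThin {V : Type*} (G : SimpleGraph V) (α β e : Sym2 V) : Prop :=
  RThin G α β e ∧ ¬ retractHasParallel (G.deleteEdges {e})

/-- The ladder with `m` rungs: two paths `x₀…x_{m-1}` (first coordinate `0`)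
and `y₀…y_{m-1}` (first coordinate `1`) together with the rungs `xᵢyᵢ`. -/
def ladderGraph (m : ℕ) : SimpleGraph (Fin 2 × Fin m) :=
  SimpleGraph.fromRel (fun p q =>
    (p.1 = q.1 ∧ p.2.val + 1 = q.2.val) ∨ (p.1 ≠ q.1 ∧ p.2 = q.2))

/-- The partial biwheel on the odd path `x₀…x_{2k-1}` (the `inl` vertices)
with hubs `u = inr 0` (joined to the even-indexed path vertices) and
`w = inr 1` (joined to the odd-indexed path vertices). -/
def biwheelGraph (k : ℕ) : SimpleGraph (Fin (2 * k) ⊕ Fin 2) :=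
  SimpleGraph.fromRel (fun p q =>
    match p, q with
    | Sum.inl i, Sum.inl j => i.val + 1 = j.val
    | Sum.inr h, Sum.inl i => (h = 0 ∧ i.val % 2 = 0) ∨ (h = 1 ∧ i.val % 2 = 1)
    | _, _ => False)

/-- The subgraph `K` of `Γ` is a ladder with `m` rungs and corners `a u b w`:
`au` and `bw` are its external rungs, labelled according to the convention
that `a` and `w` lie in one colour class and `b` and `u` in the other. -/
def LadderOn {W : Type*} (Γ : SimpleGraph W) (K : Γ.Subgraph) (m : ℕ)
    (a u b w : W) : Prop :=
  ∃ (hm : 3 ≤ m) (φ : ladderGraph m ≃g K.coe),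
    (φ ((0 : Fin 2), (⟨0, by omega⟩ : Fin m))).val = a ∧
    (φ ((1 : Fin 2), (⟨0, by omega⟩ : Fin m))).val = u ∧
    (if m % 2 = 1 then
        (φ ((0 : Fin 2), (⟨m - 1, by omega⟩ : Fin m))).val = w ∧
        (φ ((1 : Fin 2), (⟨m - 1, by omega⟩ : Fin m))).val = b
      else
        (φ ((1 : Fin 2), (⟨m - 1, by omega⟩ : Fin m))).val = w ∧
        (φ ((0 : Fin 2), (⟨m - 1, by omega⟩ : Fin m))).val = b)

/-- The subgraph `K` of `Γ` is a partial biwheel (parameter `k`, order `2k+2`)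
with ends `a`, `b` and hubs `u`, `w`; its external spokes are `au` and `bw`. -/
def BiwheelOn {W : Type*} (Γ : SimpleGraph W) (K : Γ.Subgraph) (k : ℕ)
    (a u b w : W) : Prop :=
  ∃ (hk : 2 ≤ k) (φ : biwheelGraph k ≃g K.coe),
    (φ (Sum.inl (⟨0, by omega⟩ : Fin (2 * k)))).val = a ∧
    (φ (Sum.inl (⟨2 * k - 1, by omega⟩ : Fin (2 * k)))).val = b ∧
    (φ (Sum.inr 0)).val = u ∧
    (φ (Sum.inr 1)).val = w

/-- Truncated biwheel: a spanning partial biwheel plus the edges `aw`, `bu`. -/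
def IsTruncatedBiwheel {V : Type*} (G : SimpleGraph V) : Prop :=
  ∃ (K : G.Subgraph) (k : ℕ) (a u b w : V),
    BiwheelOn G K k a u b w ∧ K.verts = Set.univ ∧
    G.edgeSet = K.edgeSet ∪ {s(a, w), s(b, u)}

/-- Prism: a spanning odd ladder plus the edges `aw`, `bu`. -/
def IsPrism {V : Type*} (G : SimpleGraph V) : Prop :=
  ∃ (K : G.Subgraph) (m : ℕ) (a u b w : V),
    Odd m ∧ LadderOn G K m a u b w ∧ K.verts = Set.univ ∧
    G.edgeSet = K.edgeSet ∪ {s(a, w), s(b, u)}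

/-- Möbius ladder: a spanning even ladder plus the edges `aw`, `bu`;
by convention `K₄` is also a Möbius ladder. -/
def IsMobiusLadder {V : Type*} (G : SimpleGraph V) : Prop :=
  (∃ (K : G.Subgraph) (m : ℕ) (a u b w : V),
    Even m ∧ LadderOn G K m a u b w ∧ K.verts = Set.univ ∧
    G.edgeSet = K.edgeSet ∪ {s(a, w), s(b, u)}) ∨
  Nonempty (G ≃g (⊤ : SimpleGraph (Fin 4)))

/-- Staircase: a ladder plus two new vertices `a₂`, `b₂` and the five edges
`a a₂`, `u a₂`, `b b₂`, `w b₂`, `a₂ b₂`. -/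
def IsStaircase {V : Type*} (G : SimpleGraph V) : Prop :=
  ∃ (K : G.Subgraph) (m : ℕ) (a u b w a2 b2 : V),
    LadderOn G K m a u b w ∧
    a2 ∉ K.verts ∧ b2 ∉ K.verts ∧ a2 ≠ b2 ∧
    K.verts ∪ {a2, b2} = Set.univ ∧
    G.edgeSet = K.edgeSet ∪ {s(a, a2), s(u, a2), s(b, b2), s(w, b2), s(a2, b2)}

/-- Pseudo-biwheel: a partial biwheel of order at least eight plus two new
vertices `a₂`, `b₂` and the five edges `a a₂`, `u a₂`, `b b₂`, `w b₂`,
`a₂ b₂`. -/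
def IsPseudoBiwheel {V : Type*} (G : SimpleGraph V) : Prop :=
  ∃ (K : G.Subgraph) (k : ℕ) (a u b w a2 b2 : V),
    3 ≤ k ∧ BiwheelOn G K k a u b w ∧
    a2 ∉ K.verts ∧ b2 ∉ K.verts ∧ a2 ≠ b2 ∧
    K.verts ∪ {a2, b2} = Set.univ ∧
    G.edgeSet = K.edgeSet ∪ {s(a, a2), s(u, a2), s(b, b2), s(w, b2), s(a2, b2)}

/-- Double biwheel of type I: two partial biwheels sharing precisely their
hubs `u`, `w`, plus the edges `a₁a₂` and `b₁b₂`. -/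
def IsDoubleBiwheelI {V : Type*} (G : SimpleGraph V) : Prop :=
  ∃ (K1 K2 : G.Subgraph) (k1 k2 : ℕ) (a1 b1 a2 b2 u w : V),
    BiwheelOn G K1 k1 a1 u b1 w ∧ BiwheelOn G K2 k2 a2 u b2 w ∧
    K1.verts ∩ K2.verts = {u, w} ∧ K1.verts ∪ K2.verts = Set.univ ∧
    G.edgeSet = K1.edgeSet ∪ K2.edgeSet ∪ {s(a1, a2), s(b1, b2)}

/-- Double ladder of type I. -/
def IsDoubleLadderI {V : Type*} (G : SimpleGraph V) : Prop :=
  ∃ (K1 K2 : G.Subgraph) (m1 m2 : ℕ) (a1 b1 a2 b2 u w : V),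
    LadderOn G K1 m1 a1 u b1 w ∧ LadderOn G K2 m2 a2 u b2 w ∧
    K1.verts ∩ K2.verts = {u, w} ∧ K1.verts ∪ K2.verts = Set.univ ∧
    G.edgeSet = K1.edgeSet ∪ K2.edgeSet ∪ {s(a1, a2), s(b1, b2)}

/-- Laddered biwheel of type I. -/
def IsLadderedBiwheelI {V : Type*} (G : SimpleGraph V) : Prop :=
  ∃ (K1 K2 : G.Subgraph) (k1 m2 : ℕ) (a1 b1 a2 b2 u w : V),
    BiwheelOn G K1 k1 a1 u b1 w ∧ LadderOn G K2 m2 a2 u b2 w ∧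
    K1.verts ∩ K2.verts = {u, w} ∧ K1.verts ∪ K2.verts = Set.univ ∧
    G.edgeSet = K1.edgeSet ∪ K2.edgeSet ∪ {s(a1, a2), s(b1, b2)}

/-- Double biwheel of type II: two vertex-disjoint partial biwheels of order
at least eight plus the four edges `a₁a₂`, `b₁b₂`, `u₁w₂`, `w₁u₂`. -/
def IsDoubleBiwheelII {V : Type*} (G : SimpleGraph V) : Prop :=
  ∃ (K1 K2 : G.Subgraph) (k1 k2 : ℕ) (a1 u1 b1 w1 a2 u2 b2 w2 : V),
    3 ≤ k1 ∧ 3 ≤ k2 ∧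
    BiwheelOn G K1 k1 a1 u1 b1 w1 ∧ BiwheelOn G K2 k2 a2 u2 b2 w2 ∧
    K1.verts ∩ K2.verts = ∅ ∧ K1.verts ∪ K2.verts = Set.univ ∧
    G.edgeSet = K1.edgeSet ∪ K2.edgeSet ∪
      {s(a1, a2), s(b1, b2), s(u1, w2), s(w1, u2)}

/-- Double ladder of type II. -/
def IsDoubleLadderII {V : Type*} (G : SimpleGraph V) : Prop :=
  ∃ (K1 K2 : G.Subgraph) (m1 m2 : ℕ) (a1 u1 b1 w1 a2 u2 b2 w2 : V),
    LadderOn G K1 m1 a1 u1 b1 w1 ∧ LadderOn G K2 m2 a2 u2 b2 w2 ∧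
    K1.verts ∩ K2.verts = ∅ ∧ K1.verts ∪ K2.verts = Set.univ ∧
    G.edgeSet = K1.edgeSet ∪ K2.edgeSet ∪
      {s(a1, a2), s(b1, b2), s(u1, w2), s(w1, u2)}

/-- Laddered biwheel of type II. -/
def IsLadderedBiwheelII {V : Type*} (G : SimpleGraph V) : Prop :=
  ∃ (K1 K2 : G.Subgraph) (k1 m2 : ℕ) (a1 u1 b1 w1 a2 u2 b2 w2 : V),
    3 ≤ k1 ∧
    BiwheelOn G K1 k1 a1 u1 b1 w1 ∧ LadderOn G K2 m2 a2 u2 b2 w2 ∧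
    K1.verts ∩ K2.verts = ∅ ∧ K1.verts ∪ K2.verts = Set.univ ∧
    G.edgeSet = K1.edgeSet ∪ K2.edgeSet ∪
      {s(a1, a2), s(b1, b2), s(u1, w2), s(w1, u2)}

/-- Membership in one of the eleven infinite families. -/
def InEleven {V : Type*} (G : SimpleGraph V) : Prop :=
  IsTruncatedBiwheel G ∨ IsPrism G ∨ IsMobiusLadder G ∨ IsStaircase G ∨
  IsPseudoBiwheel G ∨ IsDoubleBiwheelI G ∨ IsDoubleLadderI G ∨
  IsLadderedBiwheelI G ∨ IsDoubleBiwheelII G ∨ IsDoubleLadderII G ∨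
  IsLadderedBiwheelII G

/-- An `R`-ladder configuration: a subgraph `K` of `H := G − R` which is a
ladder with external rungs `au` and `bw` (free corners `u`, `w`) such that
every vertex of `K` except possibly `u` and `w` is cubic in `G`, the corners
`a` and `b` lie in `V(R)`, and every internal rung is an `R`-thin edge of `G`
whose index is two. -/
def RLadderConfig {V : Type*} (G : SimpleGraph V) (α β : Sym2 V)
    (K : (G.deleteEdges {α, β}).Subgraph) (a u b w : V) : Prop :=
  ∃ (m : ℕ) (hm : 3 ≤ m) (φ : ladderGraph m ≃g K.coe),
    (φ ((0 : Fin 2), (⟨0, by omega⟩ : Fin m))).val = a ∧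
    (φ ((1 : Fin 2), (⟨0, by omega⟩ : Fin m))).val = u ∧
    (if m % 2 = 1 then
        (φ ((0 : Fin 2), (⟨m - 1, by omega⟩ : Fin m))).val = w ∧
        (φ ((1 : Fin 2), (⟨m - 1, by omega⟩ : Fin m))).val = b
      else
        (φ ((1 : Fin 2), (⟨m - 1, by omega⟩ : Fin m))).val = w ∧
        (φ ((0 : Fin 2), (⟨m - 1, by omega⟩ : Fin m))).val = b) ∧
    (∀ v ∈ K.verts, v ≠ u → v ≠ w → degOf G v = 3) ∧
    a ∈ VR α β ∧ b ∈ VR α β ∧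
    (∀ i : Fin m, 0 < i.val → i.val < m - 1 →
      RThin G α β s((φ ((0 : Fin 2), i)).val, (φ ((1 : Fin 2), i)).val) ∧
      barrierIndex
        (G.deleteEdges {s((φ ((0 : Fin 2), i)).val, (φ ((1 : Fin 2), i)).val)}) = 2)

/-- An `R`-biwheel configuration: a subgraph `K` of `H := G − R` which is a
partial biwheel with external spokes `au` and `bw` (hubs `u`, `w`) such that
the hubs are not cubic in `G`, every other vertex of `K` is cubic in `G`, the
ends `a` and `b` lie in `V(R)`, and every internal spoke is an `R`-thin edge
of `G` whose index is one. -/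
def RBiwheelConfig {V : Type*} (G : SimpleGraph V) (α β : Sym2 V)
    (K : (G.deleteEdges {α, β}).Subgraph) (a u b w : V) : Prop :=
  ∃ (k : ℕ) (hk : 2 ≤ k) (φ : biwheelGraph k ≃g K.coe),
    (φ (Sum.inl (⟨0, by omega⟩ : Fin (2 * k)))).val = a ∧
    (φ (Sum.inl (⟨2 * k - 1, by omega⟩ : Fin (2 * k)))).val = b ∧
    (φ (Sum.inr 0)).val = u ∧
    (φ (Sum.inr 1)).val = w ∧
    degOf G u ≠ 3 ∧ degOf G w ≠ 3 ∧
    (∀ v ∈ K.verts, v ≠ u → v ≠ w → degOf G v = 3) ∧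
    a ∈ VR α β ∧ b ∈ VR α β ∧
    (∀ e ∈ K.edgeSet, (u ∈ e ∨ w ∈ e) → e ≠ s(a, u) → e ≠ s(b, w) →
      RThin G α β e ∧ barrierIndex (G.deleteEdges {e}) = 1)

/-- An `R`-configuration: an `R`-ladder or an `R`-biwheel, with free corners
`u` and `w`. -/
def RConfig {V : Type*} (G : SimpleGraph V) (α β : Sym2 V)
    (K : (G.deleteEdges {α, β}).Subgraph) (a u b w : V) : Prop :=
  RLadderConfig G α β K a u b w ∨ RBiwheelConfig G α β K a u b w

/-- A 4-cycle on the four (distinct) vertices `v0 v1 v2 v3`. -/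
def Is4Cycle {V : Type*} (H : SimpleGraph V) (v0 v1 v2 v3 : V) : Prop :=
  v0 ≠ v1 ∧ v0 ≠ v2 ∧ v0 ≠ v3 ∧ v1 ≠ v2 ∧ v1 ≠ v3 ∧ v2 ≠ v3 ∧
  H.Adj v0 v1 ∧ H.Adj v1 v2 ∧ H.Adj v2 v3 ∧ H.Adj v3 v0

/-- The cut `∂(X)`. -/
def edgeCutOf {V : Type*} (G : SimpleGraph V) (X : Set V) : Set (Sym2 V) :=
  {e | e ∈ G.edgeSet ∧ ∃ p q : V, e = s(p, q) ∧ p ∈ X ∧ q ∉ X}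

/-- The cut `∂(X)` is tight: every perfect matching contains exactly one of
its edges. -/
def TightCut {V : Type*} (G : SimpleGraph V) (X : Set V) : Prop :=
  ∀ M : G.Subgraph, M.IsPerfectMatching → (M.edgeSet ∩ edgeCutOf G X).ncard = 1

/-- A brace: a bipartite matching covered graph with no nontrivial tight cut. -/
def IsBrace {V : Type*} (G : SimpleGraph V) : Prop :=
  BipartiteGraph G ∧ MatchingCovered G ∧
    ¬ ∃ X : Set V, 2 ≤ X.ncard ∧ 2 ≤ Xᶜ.ncard ∧ TightCut G X

/-!
Write `e = q₀p₀` with `q₀ ∈ A`. A matching covered graph on at least three vertices is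
2-edge-connected, since `e` lies on an alternating cycle of `M ∆ N` for perfect matchings `M ∌ e`
and `N ∋ e`; so `e` is non-removable iff some edge `ab` of `H - e` lies in no perfect matching of
`H - e`. By Hall's theorem some `S ⊆ A - a` then has fewer than `|S|` neighbours other than `b`
in `H - e`. A perfect matching of `H` avoiding `e` gives `|N(S)| ≥ |S|`, and one through `ab`, which
must contain `e`, forces `q₀ ∈ S` and `p₀ ∉ N(S)`; hence `|N(S)| = |S|` and
`(A - S, S, B - N(S), N(S))` is the required partition. Conversely, every perfect matching of
`H - e` matches `B₀` into, hence onto, `A₀`, so no edge from `A₀` to `B₁` lies in one; but an edge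
leaving `A₀ ∪ B₀` exists in the connected graph `H - e`, and it cannot go from `B₀` to `A₁`.
-/

open SimpleGraph
open scoped symmDiff

def neighborhood {V : Type*} (G : SimpleGraph V) (S : Set V) : Set V :=
  {y | ∃ x ∈ S, G.Adj x y}

section

variable {V : Type*} {G : SimpleGraph V}

theorem SimpleGraph.Subgraph.IsPerfectMatching.ncard_le_ncard [Finite V] {M : G.Subgraph}
    (hM : M.IsPerfectMatching) {S T : Set V} (hST : ∀ x ∈ S, ∀ y, M.Adj x y → y ∈ T) :
    S.ncard ≤ T.ncard := by
  choose mate hmate using fun v => Subgraph.isPerfectMatching_iff.mp hM v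
  refine Set.ncard_le_ncard_of_injOn mate (fun x hx => hST x hx _ (hmate x).1) ?_
  intro x _ y _ hxy
  exact hM.1.eq_of_adj_right (hmate x).1 (hxy ▸ (hmate y).1)

theorem SimpleGraph.Subgraph.IsPerfectMatching.exists_deleteEdges {M : G.Subgraph}
    (hM : M.IsPerfectMatching) {e : Sym2 V} (he : e ∉ M.edgeSet) :
    ∃ M' : (G.deleteEdges {e}).Subgraph, M'.IsPerfectMatching ∧ ∀ u v, M'.Adj u v ↔ M.Adj u v := by
  have hle : M.spanningCoe ≤ G.deleteEdges {e} := fun u v huv => by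
    refine SimpleGraph.deleteEdges_adj.mpr ⟨M.adj_sub huv, fun h => he ?_⟩
    exact Set.mem_singleton_iff.mp h ▸ Subgraph.mem_edgeSet.mpr huv
  exact ⟨_, (Subgraph.IsPerfectMatching.toSubgraph_iff hle).mpr hM, fun _ _ => Iff.rfl⟩

theorem MatchingCovered.exists_isPerfectMatching_not_adj (hG : MatchingCovered G)
    (h3 : 3 ≤ Nat.card V) (p q : V) :
    ∃ M : G.Subgraph, M.IsPerfectMatching ∧ ¬ M.Adj p q := by
  have : Finite V := Nat.finite_of_card_ne_zero (by omega)
  obtain ⟨r, hr⟩ : ∃ r, r ∉ ({p, q} : Set V) := by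
    refine Set.ne_univ_iff_exists_notMem _ |>.mp fun h => ?_
    have := Set.ncard_insert_le p {q}
    rw [h, Set.ncard_univ, Set.ncard_singleton] at this
    omega
  -- an edge leaving `{p, q}` meets `pq`, so a perfect matching through it avoids `pq`
  obtain ⟨d, -, hd, hd'⟩ := (hG.2.1.preconnected p r).some.exists_boundary_dart _ (by simp) hr
  obtain ⟨M, hM, hdM⟩ := hG.2.2 d.edge d.adj
  refine ⟨M, hM, fun hMpq => hd' ?_⟩
  have hMd : M.Adj d.fst d.snd := hdM
  rcases hd with hp | hq
  · exact .inr (hM.1.eq_of_adj_left (hp ▸ hMd) hMpq)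
  · exact .inl (hM.1.eq_of_adj_left (hq ▸ hMd) hMpq.symm)

theorem MatchingCovered.connected_deleteEdges [Finite V] (hG : MatchingCovered G)
    (h3 : 3 ≤ Nat.card V) {p q : V} (hpq : G.Adj p q) : (G.deleteEdges {s(p, q)}).Connected := by
  refine hG.2.1.connected_delete_edge_of_not_isBridge ?_
  obtain ⟨M, hM, hMpq⟩ := hG.exists_isPerfectMatching_not_adj h3 p q
  obtain ⟨N, hN, hNpq⟩ := hG.2.2 s(p, q) hpq
  -- `pq` lies on an alternating cycle of `M ∆ N`
  have hcyc := hM.symmDiff_isCycles hN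
  have hadj : (M.spanningCoe ∆ N.spanningCoe).Adj p q := by
    simp [symmDiff_def, hMpq, Subgraph.mem_edgeSet.mp hNpq]
  have hle : M.spanningCoe ∆ N.spanningCoe ≤ G :=
    symmDiff_le_sup.trans (sup_le M.spanningCoe_le N.spanningCoe_le)
  rw [isBridge_iff, not_not]
  exact (hcyc.reachable_deleteEdges hadj).mono (deleteEdges_mono hle)

end

namespace BipartitionOf

variable {V : Type*} {G : SimpleGraph V} {A B : Set V}

theorem mono {G' : SimpleGraph V} (hbip : BipartitionOf G A B) (h : G' ≤ G) :
    BipartitionOf G' A B :=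
  ⟨hbip.1, hbip.2.1, fun _ _ huv => hbip.2.2 (h huv)⟩

theorem mem_right_of_notMem_left (hbip : BipartitionOf G A B) {v : V} (hv : v ∉ A) : v ∈ B :=
  ((Set.ext_iff.mp hbip.1 v).mpr trivial).resolve_left hv

theorem exists_eq_of_mem_edgeSet (hbip : BipartitionOf G A B) {e : Sym2 V} (he : e ∈ G.edgeSet) :
    ∃ a ∈ A, ∃ b ∈ B, e = s(a, b) := by
  induction e using Sym2.ind with
  | _ x y =>
    by_cases hx : x ∈ A
    · exact ⟨x, hx, y, (hbip.2.2 he).mp hx, rfl⟩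
    · have hxB := hbip.mem_right_of_notMem_left hx
      exact ⟨y, (hbip.2.2 he.symm).mpr hxB, x, hxB, Sym2.eq_swap⟩

theorem ncard_eq [Finite V] (hbip : BipartitionOf G A B) {M : G.Subgraph}
    (hM : M.IsPerfectMatching) : A.ncard = B.ncard :=
  le_antisymm (hM.ncard_le_ncard fun _ hx _ hxy => (hbip.2.2 (M.adj_sub hxy)).mp hx)
    (hM.ncard_le_ncard fun _ hx _ hxy => (hbip.2.2 (M.adj_sub hxy).symm).mpr hx)

theorem exists_isPerfectMatching_adj (hbip : BipartitionOf G A B) {a b : V} (ha : a ∈ A)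
    (hb : b ∈ B) (hab : G.Adj a b) (f : ↥(A \ {a}) ≃ ↥(B \ {b}))
    (hf : ∀ x : ↥(A \ {a}), G.Adj x (f x)) :
    ∃ M : G.Subgraph, M.IsPerfectMatching ∧ M.Adj a b := by
  have hAB := hbip.2.1
  obtain ⟨M, hMverts, hM⟩ := Subgraph.IsMatching.exists_of_disjoint_sets_of_equiv
    (hAB.mono Set.sdiff_subset Set.sdiff_subset) f hf
  have hdisj : Disjoint M.support (G.subgraphOfAdj hab).support := by
    rw [hM.support_eq_verts, (Subgraph.IsMatching.subgraphOfAdj hab).support_eq_verts,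
      hMverts, subgraphOfAdj_verts, Set.disjoint_insert_right, Set.disjoint_singleton_right]
    refine ⟨fun h => ?_, fun h => ?_⟩ <;> rcases h with h | h
    exacts [h.2 rfl, Set.disjoint_left.mp hAB ha h.1, Set.disjoint_left.mp hAB h.1 hb, h.2 rfl]
  refine ⟨M ⊔ G.subgraphOfAdj hab, ⟨hM.sup (.subgraphOfAdj hab) hdisj, fun v => ?_⟩, .inr rfl⟩
  by_cases hv : v = a ∨ v = b
  · exact .inr (by simpa using hv)
  · push Not at hv
    refine .inl (hMverts ▸ ?_)
    by_cases hvA : v ∈ A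
    exacts [.inl ⟨hvA, hv.1⟩, .inr ⟨hbip.mem_right_of_notMem_left hvA, hv.2⟩]

theorem exists_ncard_lt_of_forall_not_adj [Finite V] (hbip : BipartitionOf G A B)
    (hAB : A.ncard = B.ncard) {a b : V} (ha : a ∈ A) (hb : b ∈ B) (hab : G.Adj a b)
    (hno : ∀ M : G.Subgraph, M.IsPerfectMatching → ¬ M.Adj a b) :
    ∃ S ⊆ A \ {a}, (neighborhood G S \ {b}).ncard < S.ncard := by
  classical
  have := Fintype.ofFinite V
  by_contra! hS
  have hcoe {X : Set V} (s : Finset X) : (((↑) : X → V) '' s).ncard = s.card := by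
    rw [Set.ncard_image_of_injective _ Subtype.val_injective, Set.ncard_coe_finset]
  have hhall (s : Finset ↥(A \ {a})) :
      s.card ≤ (Finset.univ.filter fun y : ↥(B \ {b}) => ∃ x ∈ s, G.Adj x y).card := by
    set F := Finset.univ.filter fun y : ↥(B \ {b}) => ∃ x ∈ s, G.Adj x y
    have hF : Subtype.val '' (F : Set ↥(B \ {b})) =
        neighborhood G (Subtype.val '' (s : Set ↥(A \ {a}))) \ {b} := by
      ext y
      simp only [F, neighborhood, Finset.coe_filter, Finset.mem_univ, true_and]
      constructor
      · rintro ⟨y, ⟨x, hxs, hxy⟩, rfl⟩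
        exact ⟨⟨x, ⟨x, hxs, rfl⟩, hxy⟩, y.2.2⟩
      · rintro ⟨⟨_, ⟨x, hxs, rfl⟩, hxy⟩, hyb⟩
        exact ⟨⟨y, (hbip.2.2 hxy).mp x.2.1, hyb⟩, ⟨x, hxs, hxy⟩, rfl⟩
    rw [← hcoe s, ← hcoe F, hF]
    exact hS _ (by rintro _ ⟨x, -, rfl⟩; exact x.2)
  obtain ⟨f, hfinj, hf⟩ := (Fintype.all_card_le_filter_rel_iff_exists_injective _).mp hhall
  have hbij : f.Bijective := hfinj.bijective_of_nat_card_le <| by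
    simp only [Nat.card_coe_set_eq, Set.ncard_sdiff_singleton_of_mem ha,
      Set.ncard_sdiff_singleton_of_mem hb, hAB, le_refl]
  obtain ⟨M, hM, hMab⟩ := hbip.exists_isPerfectMatching_adj ha hb hab (.ofBijective f hbij) hf
  exact hno M hM hMab

-- a perfect matching containing `xy` would match `B₀` into `A₀ \ {x}`
theorem not_adj_of_isPerfectMatching [Finite V] (hbip : BipartitionOf G A B) {A₀ B₀ : Set V}
    (hB₀ : B₀ ⊆ B) (hcard : A₀.ncard ≤ B₀.ncard) (hno : ∀ u ∈ B₀, ∀ v ∈ A \ A₀, ¬ G.Adj u v)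
    {x y : V} (hx : x ∈ A₀) (hy : y ∉ B₀) {M : G.Subgraph} (hM : M.IsPerfectMatching) :
    ¬ M.Adj x y := by
  intro hxy
  have hmaps : ∀ u ∈ B₀, ∀ v, M.Adj u v → v ∈ A₀ \ {x} := by
    intro u hu v huv
    have hvA : v ∈ A := (hbip.2.2 (M.adj_sub huv).symm).mpr (hB₀ hu)
    refine ⟨by_contra fun hv => hno u hu v ⟨hvA, hv⟩ (M.adj_sub huv), fun hvx => hy ?_⟩
    rw [Set.mem_singleton_iff] at hvx
    exact hM.1.eq_of_adj_left (hvx ▸ huv.symm) hxy ▸ hu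
  have := hM.ncard_le_ncard hmaps
  have := Set.ncard_sdiff_singleton_lt_of_mem hx
  omega

end BipartitionOf

section

variable {V : Type*} {H : SimpleGraph V} {A B : Set V}

theorem exists_ncard_neighborhood_eq_of_not_matchingCovered [Finite V] (hMC : MatchingCovered H)
    (hbip : BipartitionOf H A B) (h3 : 3 ≤ Nat.card V) {q₀ p₀ : V} (hp₀ : p₀ ∈ B)
    (he : H.Adj q₀ p₀) (hnot : ¬ MatchingCovered (H.deleteEdges {s(q₀, p₀)})) :
    ∃ S ⊆ A, (neighborhood (H.deleteEdges {s(q₀, p₀)}) S).ncard = S.ncard ∧ q₀ ∈ S ∧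
      p₀ ∉ neighborhood (H.deleteEdges {s(q₀, p₀)}) S := by
  set G := H.deleteEdges {s(q₀, p₀)}
  have hbipG := hbip.mono (H.deleteEdges_le {s(q₀, p₀)})
  obtain ⟨f, hf, hfno⟩ :
      ∃ f ∈ G.edgeSet, ∀ M : G.Subgraph, M.IsPerfectMatching → f ∉ M.edgeSet := by
    by_contra! h
    exact hnot ⟨hMC.1, hMC.connected_deleteEdges h3 he, h⟩
  obtain ⟨a, ha, b, hb, rfl⟩ := hbipG.exists_eq_of_mem_edgeSet hf
  obtain ⟨M, hM, hMe⟩ := hMC.exists_isPerfectMatching_not_adj h3 q₀ p₀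
  obtain ⟨M', hM', -⟩ := hM.exists_deleteEdges (e := s(q₀, p₀)) hMe
  obtain ⟨N, hN, hNab⟩ := hMC.2.2 s(a, b) (deleteEdges_adj.mp hf).1
  have hNe : N.Adj q₀ p₀ := by
    by_contra h
    obtain ⟨N', hN', hN'N⟩ := hN.exists_deleteEdges (e := s(q₀, p₀)) h
    exact hfno N' hN' ((hN'N a b).mpr hNab)
  obtain ⟨S, hS, hlt⟩ :=
    hbipG.exists_ncard_lt_of_forall_not_adj (hbipG.ncard_eq hM') ha hb hf fun M hM => hfno M hM
  set T := neighborhood G S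
  have hle : S.ncard ≤ T.ncard := hM'.ncard_le_ncard fun x hx _ hxy => ⟨x, hx, M'.adj_sub hxy⟩
  have hT : T.ncard ≤ (T \ {b}).ncard + 1 := by
    simpa using Set.ncard_le_ncard_sdiff_add_ncard T {b}
  -- otherwise `N` would match `S` into `T \ {b}`
  have hq₀p₀ : q₀ ∈ S ∧ p₀ ∉ T := by
    by_contra h
    refine hlt.not_ge (hN.ncard_le_ncard fun x hx y hxy => ⟨?_, fun hyb => ?_⟩)
    · by_cases hxy' : s(x, y) = s(q₀, p₀)
      · obtain ⟨rfl, rfl⟩ | ⟨rfl, -⟩ := Sym2.eq_iff.mp hxy'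
        · exact by_contra fun hyT => h ⟨hx, hyT⟩
        · exact absurd hp₀ (hbip.2.1.notMem_of_mem_left (hS hx).1)
      · exact ⟨x, hx, deleteEdges_adj.mpr ⟨N.adj_sub hxy, by simpa using hxy'⟩⟩
    · exact (hS hx).2 (hN.1.eq_of_adj_right (Set.mem_singleton_iff.mp hyb ▸ hxy) hNab)
  have hTS : T.ncard = S.ncard := by omega
  exact ⟨S, hS.trans Set.sdiff_subset, hTS, hq₀p₀⟩

theorem exists_partition_of_ncard_neighborhood_eq [Finite V] (hbip : BipartitionOf H A B)
    (hAB : A.ncard = B.ncard) {S : Set V} (hS : S ⊆ A) {q₀ p₀ : V} (hp₀ : p₀ ∈ B)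
    (he : H.Adj q₀ p₀) (hcard : (neighborhood (H.deleteEdges {s(q₀, p₀)}) S).ncard = S.ncard)
    (hq₀ : q₀ ∈ S) (hp₀S : p₀ ∉ neighborhood (H.deleteEdges {s(q₀, p₀)}) S) :
    ∃ A0 A1 B0 B1 : Set V,
      A0 ∪ A1 = A ∧ Disjoint A0 A1 ∧ B0 ∪ B1 = B ∧ Disjoint B0 B1 ∧ A0.ncard = B0.ncard ∧
      {f : Sym2 V | f ∈ H.edgeSet ∧ ∃ p ∈ B0, ∃ q ∈ A1, f = s(p, q)} = {s(q₀, p₀)} := by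
  set T := neighborhood (H.deleteEdges {s(q₀, p₀)}) S
  have hTB : T ⊆ B := by
    rintro y ⟨x, hx, hxy⟩
    exact (hbip.2.2 (deleteEdges_adj.mp hxy).1).mp (hS hx)
  refine ⟨A \ S, S, B \ T, T, Set.sdiff_union_of_subset hS, Set.disjoint_sdiff_left,
    Set.sdiff_union_of_subset hTB, Set.disjoint_sdiff_left, ?_, ?_⟩
  · rw [Set.ncard_sdiff hS, Set.ncard_sdiff hTB, hAB, hcard]
  · ext f
    constructor
    · rintro ⟨hf, p, ⟨-, hpT⟩, q, hq, rfl⟩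
      by_contra hne
      refine hpT ⟨q, hq, deleteEdges_adj.mpr ⟨(hf : H.Adj p q).symm, ?_⟩⟩
      simpa [Sym2.eq_swap] using hne
    · rintro rfl
      exact ⟨he, p₀, ⟨hp₀, hp₀S⟩, q₀, hq₀, Sym2.eq_swap⟩

theorem not_matchingCovered_deleteEdges [Finite V] (hbip : BipartitionOf H A B)
    {A₀ A₁ B₀ B₁ : Set V} {e : Sym2 V} (hA : A₀ ∪ A₁ = A) (hA₀₁ : Disjoint A₀ A₁)
    (hB : B₀ ∪ B₁ = B) (hcard : A₀.ncard = B₀.ncard)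
    (hcross : {f : Sym2 V | f ∈ H.edgeSet ∧ ∃ p ∈ B₀, ∃ q ∈ A₁, f = s(p, q)} = {e}) :
    ¬ MatchingCovered (H.deleteEdges {e}) := by
  intro hMC
  have hbip' := hbip.mono (H.deleteEdges_le {e})
  have hno : ∀ u ∈ B₀, ∀ v ∈ A \ A₀, ¬ (H.deleteEdges {e}).Adj u v := by
    intro u hu v hv huv
    have hvA₁ : v ∈ A₁ := ((hA ▸ hv.1 : v ∈ A₀ ∪ A₁)).resolve_left hv.2
    have : s(u, v) ∈ ({e} : Set (Sym2 V)) := hcross ▸ ⟨huv.1, u, hu, v, hvA₁, rfl⟩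
    exact (deleteEdges_adj.mp huv).2 this
  have he : e ∈ {f : Sym2 V | f ∈ H.edgeSet ∧ ∃ p ∈ B₀, ∃ q ∈ A₁, f = s(p, q)} := hcross ▸ rfl
  obtain ⟨-, p, hp, q, hq, rfl⟩ := he
  have hB₀ : B₀ ⊆ B := hB ▸ Set.subset_union_left
  have hqA : q ∈ A := hA ▸ .inr hq
  have hq' : q ∉ A₀ ∪ B₀ := by
    rintro (h | h)
    exacts [hA₀₁.notMem_of_mem_left h hq, hbip.2.1.notMem_of_mem_left hqA (hB₀ h)]
  obtain ⟨d, -, hd, hd'⟩ := (hMC.2.1.preconnected p q).some.exists_boundary_dart _ (.inr hp) hq'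
  rcases hd with hdA₀ | hdB₀
  · obtain ⟨M, hM, hdM⟩ := hMC.2.2 d.edge d.adj
    exact hbip'.not_adj_of_isPerfectMatching hB₀ hcard.le hno hdA₀ (fun h => hd' (.inr h)) hM hdM
  · exact hno _ hdB₀ _ ⟨(hbip'.2.2 d.adj.symm).mpr (hB₀ hdB₀), fun h => hd' (.inl h)⟩ d.adj

end

theorem stmt10_general {V : Type*} (H : SimpleGraph V) (A B : Set V)
    (hMC : MatchingCovered H) (hbip : BipartitionOf H A B)
    (hcard : 4 ≤ Nat.card V) (e : Sym2 V) (he : e ∈ H.edgeSet) :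
    ¬ RemovableEdge H e ↔
      ∃ A0 A1 B0 B1 : Set V,
        A0 ∪ A1 = A ∧ Disjoint A0 A1 ∧ B0 ∪ B1 = B ∧ Disjoint B0 B1 ∧
        A0.ncard = B0.ncard ∧
        {f : Sym2 V | f ∈ H.edgeSet ∧ ∃ p ∈ B0, ∃ q ∈ A1, f = s(p, q)} = {e} := by
  have : Finite V := Nat.finite_of_card_ne_zero (by omega)
  obtain ⟨q₀, -, p₀, hp₀, rfl⟩ := hbip.exists_eq_of_mem_edgeSet he
  constructor
  · intro hnot
    obtain ⟨S, hSA, hST, hq₀, hp₀T⟩ := exists_ncard_neighborhood_eq_of_not_matchingCovered hMC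
      hbip (by omega) hp₀ he fun h => hnot ⟨he, h⟩
    obtain ⟨M, hM, -⟩ := hMC.2.2 _ he
    exact exists_partition_of_ncard_neighborhood_eq hbip (hbip.ncard_eq hM) hSA hp₀ he hST hq₀ hp₀T
  · rintro ⟨A0, A1, B0, B1, hA, hA01, hB, -, hcard, hcross⟩ ⟨-, hMC'⟩
    exact not_matchingCovered_deleteEdges hbip hA hA01 hB hcard hcross hMC'

/-- characterization of non-removable edges of bipartite
matching covered graphs. -/
theorem stmt10 {V : Type*} [Fintype V] (H : SimpleGraph V) (A B : Set V)
    (hMC : MatchingCovered H) (hbip : BipartitionOf H A B)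
    (hcard : 4 ≤ Nat.card V) (e : Sym2 V) (he : e ∈ H.edgeSet) :
    ¬ RemovableEdge H e ↔
      ∃ A0 A1 B0 B1 : Set V,
        A0 ∪ A1 = A ∧ Disjoint A0 A1 ∧ B0 ∪ B1 = B ∧ Disjoint B0 B1 ∧
        A0.ncard = B0.ncard ∧
        {f : Sym2 V | f ∈ H.edgeSet ∧ ∃ p ∈ B0, ∃ q ∈ A1, f = s(p, q)} = {e} :=
  stmt10_general H A B hMC hbip hcard e he
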